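/- arXiv:2404.05727 — 2 statements merged into one kernel-verified Lean document; each statement's English description precedes it below -/
import Mathlib

section
/- For all subsets I, J ⊆ ℤ/d with |I| = |J|: if I = J then N_I · P_{J^c} = (p^d + (−1)^{|I|}) · L_{ℤ/d} in R, and if I ≠ J then N_I · P_{J^c} = 0 in R. -/
/-!
Expanding `∏ᵢ (p lᵢ ± l_{i+1})` over subsets `T ⊆ ℤ/d` (the indices where `p lᵢ` is chosen), every
`T ≠ ∅, ℤ/d` has a boundary point `i ∉ T`, `i + 1 ∈ T`, so the monomial contains `l_{i+1}² = 0`.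
Only `T = ℤ/d` and `T = ∅` survive, giving `p^d L` and `(-1)^|I| L`. If `I ≠ J` have the same size,
some `i ∈ I \ J` contributes the factor `Nᵢ Pᵢ = p² lᵢ² − l_{i+1}² = 0`.
-/

open MvPolynomial Finset

noncomputable section

/-- The ideal of `ℚ[x_i : i ∈ ℤ/d]` generated by the squares of the variables. -/
def sqIdeal (d : ℕ) : Ideal (MvPolynomial (ZMod d) ℚ) :=
  Ideal.span (Set.range fun i : ZMod d => (X i) ^ 2)

/-- The ring `R = ℚ[x_i : i ∈ ℤ/d]/(x_i²)`. -/
abbrev ZipRing (d : ℕ) := MvPolynomial (ZMod d) ℚ ⧸ sqIdeal d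

/-- The class `l_i` of the variable `x_i` in `R`. -/
def lcl (d : ℕ) (i : ZMod d) : ZipRing d := Ideal.Quotient.mk (sqIdeal d) (X i)

/-- The Hodge–Chern monomial `L_I = ∏_{i ∈ I} l_i`. -/
def Lmon (d : ℕ) (I : Finset (ZMod d)) : ZipRing d := ∏ i ∈ I, lcl d i

/-- `N_i = p·l_i − l_{i+1}`. -/
def Nelt (d p : ℕ) (i : ZMod d) : ZipRing d := (p : ZipRing d) * lcl d i - lcl d (i + 1)

/-- `P_i = p·l_i + l_{i+1}`. -/
def Pelt (d p : ℕ) (i : ZMod d) : ZipRing d := (p : ZipRing d) * lcl d i + lcl d (i + 1)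

/-- The strata class `N_I = ∏_{i ∈ I} N_i`. -/
def Nmon (d p : ℕ) (I : Finset (ZMod d)) : ZipRing d := ∏ i ∈ I, Nelt d p i

/-- `P_I = ∏_{i ∈ I} P_i`. -/
def Pmon (d p : ℕ) (I : Finset (ZMod d)) : ZipRing d := ∏ i ∈ I, Pelt d p i

namespace ZMod

theorem eq_univ_of_forall_add_one_mem {d : ℕ} [NeZero d] {s : Finset (ZMod d)}
    (hs : s.Nonempty) (h : ∀ i ∈ s, i + 1 ∈ s) : s = univ := by
  obtain ⟨k, hk⟩ := hs
  have hk_add : ∀ n : ℕ, k + n ∈ s := by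
    intro n
    induction n with
    | zero => simpa using hk
    | succ n ih => simpa [add_assoc] using h _ ih
  refine eq_univ_of_forall fun j => ?_
  simpa using hk_add (j - k).val

theorem exists_notMem_add_one_mem {d : ℕ} [NeZero d] {s : Finset (ZMod d)}
    (hs : s.Nonempty) (hs' : s ≠ univ) : ∃ i, i ∉ s ∧ i + 1 ∈ s := by
  obtain ⟨j, hj⟩ : ∃ j, j ∉ s := by simpa [eq_univ_iff_forall] using hs'
  by_contra! h
  have hcompl : sᶜ = univ := eq_univ_of_forall_add_one_mem ⟨j, mem_compl.mpr hj⟩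
    fun i hi => mem_compl.mpr (h i (mem_compl.mp hi))
  exact hs.ne_empty (compl_eq_univ_iff s |>.mp hcompl)

theorem prod_add_eq_of_mul_add_one_eq_zero {R : Type*} [CommSemiring R] {d : ℕ} [NeZero d]
    (a b : ZMod d → R) (h : ∀ i, b i * a (i + 1) = 0) :
    ∏ i, (a i + b i) = ∏ i, a i + ∏ i, b i := by
  rw [prod_add, sum_eq_add_of_mem univ ∅ (mem_powerset.mpr subset_rfl)
    (mem_powerset.mpr (empty_subset _)) univ_nonempty.ne_empty]
  · simp
  · rintro t - ⟨ht_univ, ht_empty⟩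
    obtain ⟨i, hit, hit1⟩ :=
      exists_notMem_add_one_mem (nonempty_iff_ne_empty.mpr ht_empty) ht_univ
    have hdvd : b i * a (i + 1) ∣ (∏ j ∈ t, a j) * ∏ j ∈ univ \ t, b j :=
      mul_comm (b i) _ ▸ mul_dvd_mul (dvd_prod_of_mem a hit1)
        (dvd_prod_of_mem b (by simpa using hit))
    rwa [h, zero_dvd_iff] at hdvd

end ZMod

section ZipRing

variable {d : ℕ}

theorem lcl_mul_self (i : ZMod d) : lcl d i * lcl d i = 0 := by
  rw [lcl, ← map_mul, Ideal.Quotient.eq_zero_iff_mem, ← sq]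
  exact Ideal.subset_span ⟨i, rfl⟩

theorem Nelt_mul_Pelt (p : ℕ) (i : ZMod d) : Nelt d p i * Pelt d p i = 0 := by
  unfold Nelt Pelt
  linear_combination (p : ZipRing d) ^ 2 * lcl_mul_self i - lcl_mul_self (i + 1)

theorem prod_lcl_add_one [NeZero d] : ∏ i : ZMod d, lcl d (i + 1) = Lmon d univ :=
  Fintype.prod_equiv (Equiv.addRight 1) _ _ fun _ => rfl

theorem Nmon_mul_Pmon_compl_of_ne [NeZero d] (p : ℕ) {I J : Finset (ZMod d)}
    (hIJ : I.card = J.card) (hne : I ≠ J) : Nmon d p I * Pmon d p Jᶜ = 0 := by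
  obtain ⟨i, hiI, hiJ⟩ : ∃ i ∈ I, i ∉ J := by
    by_contra! h
    exact hne (eq_of_subset_of_card_le h hIJ.ge)
  rw [Nmon, Pmon, ← mul_prod_erase I _ hiI, ← mul_prod_erase Jᶜ _ (mem_compl.mpr hiJ),
    mul_mul_mul_comm, Nelt_mul_Pelt, zero_mul]

theorem Nmon_mul_Pmon_compl_self [NeZero d] (p : ℕ) (I : Finset (ZMod d)) :
    Nmon d p I * Pmon d p Iᶜ = ((p : ℚ) ^ d + (-1) ^ I.card) • Lmon d univ := by
  set ε : ZMod d → ZipRing d := fun i => if i ∈ I then -1 else 1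
  have hε : ∏ i, ε i = (-1) ^ I.card := by simp [ε, prod_ite_mem]
  have hsplit :
      Nmon d p I * Pmon d p Iᶜ = ∏ i, ((p : ZipRing d) * lcl d i + ε i * lcl d (i + 1)) := by
    rw [← prod_mul_prod_compl I, Nmon, Pmon]
    congr 1 <;> refine prod_congr rfl fun i hi => ?_
    · simp only [ε, Nelt, if_pos hi]
      ring
    · simp only [ε, Pelt, if_neg (mem_compl.mp hi), one_mul]
  have hvanish (i : ZMod d) : ε i * lcl d (i + 1) * ((p : ZipRing d) * lcl d (i + 1)) = 0 := by
    linear_combination ε i * p * lcl_mul_self (i + 1)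
  rw [hsplit, ZMod.prod_add_eq_of_mul_add_one_eq_zero _ _ hvanish, prod_mul_distrib,
    prod_mul_distrib, prod_const, hε, prod_lcl_add_one, card_univ, ZMod.card, ← Lmon,
    Algebra.smul_def (A := ZipRing d), map_add, map_pow, map_pow, map_natCast, map_neg, map_one,
    add_mul]

end ZipRing

theorem stmt3_general (d p : ℕ) [NeZero d] (I J : Finset (ZMod d))
    (hIJ : I.card = J.card) :
    (I = J →
      Nmon d p I * Pmon d p Jᶜ =
        ((p : ℚ) ^ d + (-1) ^ I.card) • Lmon d Finset.univ) ∧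
    (I ≠ J → Nmon d p I * Pmon d p Jᶜ = 0) := by
  refine ⟨?_, Nmon_mul_Pmon_compl_of_ne p hIJ⟩
  rintro rfl
  exact Nmon_mul_Pmon_compl_self p I

/-- For equinumerous `I, J ⊆ ℤ/d`: `N_I · P_{J^c} = (p^d + (−1)^{|I|}) · L_{ℤ/d}` if `I = J`,
and `N_I · P_{J^c} = 0` if `I ≠ J`. -/
theorem stmt3 (d p : ℕ) [NeZero d] (hp : p.Prime) (I J : Finset (ZMod d))
    (hIJ : I.card = J.card) :
    (I = J →
      Nmon d p I * Pmon d p Jᶜ =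
        ((p : ℚ) ^ d + (-1) ^ I.card) • Lmon d Finset.univ) ∧
    (I ≠ J → Nmon d p I * Pmon d p Jᶜ = 0) :=
  stmt3_general d p I J hIJ
end
end

section
/- For every integer m with 0 ≤ m ≤ d, the family (N_J)_{J ⊆ ℤ/d, |J| = m} is linearly independent over ℚ in R, and its ℚ-linear span equals the ℚ-linear span of the family (L_I)_{I ⊆ ℤ/d, |I| = m}; in other words, the matrix A_m expressing the N_J (|J| = m) in the basis (L_I)_{|I| = m} is invertible (its entries are integers whose reduction modulo p is a permutation matrix). -/
open MvPolynomial Finset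

noncomputable section

/-!
Coordinates in `R` with respect to the squarefree monomials are read off by the coefficient
functionals of `ℚ[x_i]`, which vanish on the ideal `(x_i²)`. In these coordinates
`N_J = ∏_{i ∈ J} (p l_i − l_{i+1})` is integral, and modulo `p` it is `(-1)^|J| L_{J+1}`.
So for `|J| = m` the coordinate matrix of the `N_J` against the `L_I` is, modulo `p`, a sign
times a permutation matrix; its determinant is prime to `p`, hence nonzero. Since `N_J` is a
product of `|J|` linear forms, it lies in the span of the `L_I` with `|I| = |J|`,
and the two spans agree by counting dimensions.
-/

theorem linearIndependent_of_det_ne_zero {K M ι : Type*} [Field K] [AddCommGroup M] [Module K M]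
    [Fintype ι] [DecidableEq ι] (v : ι → M) (φ : ι → M →ₗ[K] K)
    (h : (Matrix.of fun i j => φ i (v j)).det ≠ 0) : LinearIndependent K v := by
  refine Fintype.linearIndependent_iff.mpr fun g hg => congrFun ?_
  refine Matrix.eq_zero_of_mulVec_eq_zero h (funext fun i => ?_)
  simpa [Matrix.mulVec, dotProduct, mul_comm] using congrArg (φ i) hg

section Squarefree

variable {σ : Type*}

def sqfreeExp (I : Finset σ) : σ →₀ ℕ := ∑ i ∈ I, Finsupp.single i 1

theorem sqfreeExp_apply [DecidableEq σ] (I : Finset σ) (j : σ) :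
    sqfreeExp I j = if j ∈ I then 1 else 0 := by
  simp [sqfreeExp, Finsupp.finsetSum_apply, Finsupp.single_apply]

theorem sqfreeExp_le_one (I : Finset σ) (j : σ) : sqfreeExp I j ≤ 1 := by
  classical
  rw [sqfreeExp_apply]
  split <;> omega

theorem sqfreeExp_injective : Function.Injective (sqfreeExp : Finset σ → σ →₀ ℕ) := by
  classical
  intro I J h
  ext j
  have hj := congrArg (· j) h
  simp only [sqfreeExp_apply] at hj
  by_cases hI : j ∈ I <;> by_cases hJ : j ∈ J <;> simp_all

theorem prod_X_eq_monomial_sqfreeExp {R : Type*} [CommSemiring R] (I : Finset σ) :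
    ∏ i ∈ I, (X i : MvPolynomial σ R) = monomial (sqfreeExp I) 1 :=
  (monomial_sum_one I _).symm

theorem coeff_sqfreeExp_eq_zero_of_mem {R : Type*} [CommSemiring R] {f : MvPolynomial σ R}
    (hf : f ∈ Ideal.span (Set.range fun i : σ => (X i) ^ 2)) (I : Finset σ) :
    coeff (sqfreeExp I) f = 0 := by
  have hrange : Set.range (fun i : σ => (X i : MvPolynomial σ R) ^ 2) =
      (fun s => monomial s (1 : R)) '' Set.range fun i => Finsupp.single i 2 := by
    rw [← Set.range_comp]
    exact congrArg Set.range (funext fun i => X_pow_eq_monomial)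
  rw [hrange, mem_ideal_span_monomial_image] at hf
  by_contra hne
  obtain ⟨_, ⟨i, rfl⟩, hle⟩ := hf _ (mem_support_iff.mpr hne)
  have := (hle i).trans (sqfreeExp_le_one I i)
  simp at this

end Squarefree

namespace ZipRing

variable {d : ℕ}

def coeff (I : Finset (ZMod d)) : ZipRing d →ₗ[ℚ] ℚ :=
  ((sqIdeal d).restrictScalars ℚ).liftQ (lcoeff ℚ (sqfreeExp I))
      (fun _ hf => coeff_sqfreeExp_eq_zero_of_mem hf I) ∘ₗ
    (Submodule.Quotient.restrictScalarsEquiv ℚ (sqIdeal d)).symm.toLinearMap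

theorem coeff_mk (I : Finset (ZMod d)) (f : MvPolynomial (ZMod d) ℚ) :
    coeff I (Ideal.Quotient.mk (sqIdeal d) f) = MvPolynomial.coeff (sqfreeExp I) f :=
  rfl

theorem Lmon_eq_mk (I : Finset (ZMod d)) :
    Lmon d I = Ideal.Quotient.mk (sqIdeal d) (monomial (sqfreeExp I) 1) := by
  rw [← prod_X_eq_monomial_sqfreeExp, map_prod]
  rfl

theorem coeff_Lmon (I J : Finset (ZMod d)) : coeff I (Lmon d J) = if I = J then 1 else 0 := by
  classical
  rw [Lmon_eq_mk, coeff_mk, coeff_monomial]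
  exact if_congr (sqfreeExp_injective.eq_iff.trans eq_comm) rfl rfl

theorem lcl_mul_self (i : ZMod d) : lcl d i * lcl d i = 0 := by
  rw [lcl, ← map_mul, ← sq, Ideal.Quotient.eq_zero_iff_mem]
  exact Ideal.subset_span ⟨i, rfl⟩

end ZipRing

def Lspan (d m : ℕ) : Submodule ℚ (ZipRing d) :=
  Submodule.span ℚ (Set.range fun I : {I : Finset (ZMod d) // I.card = m} => Lmon d I.1)

theorem lcl_mul_Lmon_mem_Lspan {d : ℕ} (j : ZMod d) (I : Finset (ZMod d)) :
    lcl d j * Lmon d I ∈ Lspan d (I.card + 1) := by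
  classical
  by_cases hj : j ∈ I
  · rw [Lmon, ← Finset.mul_prod_erase I _ hj, ← mul_assoc, ZipRing.lcl_mul_self, zero_mul]
    exact zero_mem _
  · rw [Lmon, ← Finset.prod_insert hj]
    exact Submodule.subset_span ⟨⟨insert j I, Finset.card_insert_of_notMem hj⟩, rfl⟩

theorem mul_mem_Lspan {d m : ℕ} {y x : ZipRing d}
    (hy : y ∈ Submodule.span ℚ (Set.range (lcl d))) (hx : x ∈ Lspan d m) : y * x ∈ Lspan d (m + 1) := by
  have hyx := Submodule.mul_mem_mul hy hx
  rw [Lspan, Submodule.span_mul_span] at hyx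
  refine Submodule.span_le.mpr ?_ hyx
  rintro _ ⟨_, ⟨j, rfl⟩, _, ⟨I, rfl⟩, rfl⟩
  have hmem := lcl_mul_Lmon_mem_Lspan j I.1
  rwa [I.2] at hmem

theorem Nelt_mem_span_lcl (d p : ℕ) (i : ZMod d) :
    Nelt d p i ∈ Submodule.span ℚ (Set.range (lcl d)) := by
  rw [Nelt, ← nsmul_eq_mul]
  exact sub_mem (nsmul_mem (Submodule.subset_span (Set.mem_range_self i)) p)
    (Submodule.subset_span (Set.mem_range_self (i + 1)))

theorem Nmon_mem_Lspan (d p : ℕ) (J : Finset (ZMod d)) : Nmon d p J ∈ Lspan d J.card := by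
  classical
  induction J using Finset.induction with
  | empty => exact Submodule.subset_span ⟨⟨∅, rfl⟩, rfl⟩
  | insert j J hj ih =>
    rw [Nmon, Finset.prod_insert hj, Finset.card_insert_of_notMem hj]
    exact mul_mem_Lspan (Nelt_mem_span_lcl d p j) ih

def stratumPoly (d p : ℕ) (J : Finset (ZMod d)) : MvPolynomial (ZMod d) ℤ :=
  ∏ i ∈ J, ((p : MvPolynomial (ZMod d) ℤ) * X i - X (i + 1))

theorem Nmon_eq_mk_map (d p : ℕ) (J : Finset (ZMod d)) :
    Nmon d p J = Ideal.Quotient.mk (sqIdeal d) (map (Int.castRingHom ℚ) (stratumPoly d p J)) := by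
  simp only [stratumPoly, Nmon, Nelt, lcl, map_prod, map_sub, map_mul, map_natCast, map_X]

theorem map_stratumPoly_zmod (d p : ℕ) (J : Finset (ZMod d)) :
    map (Int.castRingHom (ZMod p)) (stratumPoly d p J) =
      monomial (sqfreeExp (J.map (Equiv.addRight 1).toEmbedding)) ((-1) ^ J.card) := by
  have hp : (p : MvPolynomial (ZMod d) (ZMod p)) = 0 := by
    rw [← map_natCast C, ZMod.natCast_self, map_zero]
  rw [sqfreeExp, Finset.sum_map, ← Finset.prod_const, monomial_sum_prod, stratumPoly, map_prod]
  refine Finset.prod_congr rfl fun i _ => ?_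
  simp only [map_sub, map_mul, map_natCast, map_X, hp, zero_mul, zero_sub]
  rw [X, ← map_neg]
  rfl

def shiftSubsets (d m : ℕ) : Equiv.Perm {I : Finset (ZMod d) // I.card = m} :=
  Equiv.Perm.subtypePerm (Equiv.addRight (1 : ZMod d)).finsetCongr fun I => by simp

section StrataMatrix

variable (d p m : ℕ)

def strataMatrix :
    Matrix {I : Finset (ZMod d) // I.card = m} {I : Finset (ZMod d) // I.card = m} ℤ :=
  Matrix.of fun I J => coeff (sqfreeExp I.1) (stratumPoly d p J.1)

theorem strataMatrix_map_zmod :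
    (strataMatrix d p m).map (Int.cast : ℤ → ZMod p) =
      (-1 : ZMod p) ^ m • (shiftSubsets d m)⁻¹.permMatrix (ZMod p) := by
  ext I J
  rw [Matrix.map_apply, strataMatrix, Matrix.of_apply, ← eq_intCast (Int.castRingHom (ZMod p)),
    ← coeff_map, map_stratumPoly_zmod, J.2, coeff_monomial]
  simp only [Matrix.smul_apply, PEquiv.toMatrix_apply, Equiv.toPEquiv_apply, Option.mem_def,
    Option.some.injEq, smul_eq_mul, mul_ite, mul_one, mul_zero]
  refine if_congr ?_ rfl rfl
  rw [sqfreeExp_injective.eq_iff, Equiv.Perm.inv_def, Equiv.symm_apply_eq, Subtype.ext_iff]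
  exact eq_comm

theorem det_strataMatrix_ne_zero [NeZero d] (hp : p ≠ 1) : (strataMatrix d p m).det ≠ 0 := by
  have := ZMod.nontrivial_iff.mpr hp
  intro hzero
  have hdet := Int.cast_det (R := ZMod p) (strataMatrix d p m)
  rw [hzero, Int.cast_zero, strataMatrix_map_zmod, Matrix.det_smul, Matrix.det_permutation] at hdet
  exact (((isUnit_one.neg.pow m).pow _).mul
    ((Equiv.Perm.sign _).isUnit.map (Int.castRingHom _))).ne_zero hdet.symm

end StrataMatrix

theorem ZipRing.coeff_Nmon (d p m : ℕ) (I J : {I : Finset (ZMod d) // I.card = m}) :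
    ZipRing.coeff I.1 (Nmon d p J.1) = strataMatrix d p m I J := by
  rw [Nmon_eq_mk_map, ZipRing.coeff_mk, coeff_map]
  rfl

theorem linearIndependent_Lmon (d m : ℕ) [NeZero d] :
    LinearIndependent ℚ fun I : {I : Finset (ZMod d) // I.card = m} => Lmon d I.1 := by
  refine linearIndependent_of_det_ne_zero _ (fun I => ZipRing.coeff I.1) ?_
  have hone : (Matrix.of fun I J : {I : Finset (ZMod d) // I.card = m} =>
      ZipRing.coeff I.1 (Lmon d J.1)) = 1 := by
    ext I J
    simp [ZipRing.coeff_Lmon, Matrix.one_apply, Subtype.ext_iff]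
  rw [hone, Matrix.det_one]
  exact one_ne_zero

theorem linearIndependent_Nmon (d p m : ℕ) [NeZero d] (hp : p ≠ 1) :
    LinearIndependent ℚ fun J : {J : Finset (ZMod d) // J.card = m} => Nmon d p J.1 := by
  refine linearIndependent_of_det_ne_zero _ (fun I => ZipRing.coeff I.1) ?_
  simp only [ZipRing.coeff_Nmon]
  convert (Int.cast_ne_zero (α := ℚ)).mpr (det_strataMatrix_ne_zero d p m hp) using 1
  rw [Int.cast_det]
  rfl

theorem span_Nmon_le_Lspan (d p m : ℕ) :
    Submodule.span ℚ (Set.range fun J : {J : Finset (ZMod d) // J.card = m} => Nmon d p J.1) ≤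
      Lspan d m := by
  rw [Submodule.span_le]
  rintro _ ⟨J, rfl⟩
  have hmem := Nmon_mem_Lspan d p J.1
  rwa [J.2] at hmem

theorem stmt9_general (d p : ℕ) [NeZero d] (hp : p.Prime) (m : ℕ) :
    LinearIndependent ℚ
      (fun J : {J : Finset (ZMod d) // J.card = m} => Nmon d p J.1) ∧
    Submodule.span ℚ
        (Set.range fun J : {J : Finset (ZMod d) // J.card = m} => Nmon d p J.1) =
      Submodule.span ℚ
        (Set.range fun I : {I : Finset (ZMod d) // I.card = m} => Lmon d I.1) := by
  have hN := linearIndependent_Nmon d p m hp.ne_one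
  have hL := linearIndependent_Lmon d m
  have : FiniteDimensional ℚ (Lspan d m) := FiniteDimensional.span_of_finite ℚ (Set.finite_range _)
  refine ⟨hN, Submodule.eq_of_le_of_finrank_eq (S₂ := Lspan d m) (span_Nmon_le_Lspan d p m) ?_⟩
  rw [finrank_span_eq_card hN, Lspan, finrank_span_eq_card hL]

/-- For each `0 ≤ m ≤ d`, the strata classes `N_J` with `|J| = m` are linearly independent
over ℚ and span the same ℚ-subspace of `R` as the Hodge–Chern monomials `L_I` with
`|I| = m`. -/
theorem stmt9 (d p : ℕ) [NeZero d] (hp : p.Prime) (m : ℕ) (hm : m ≤ d) :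
    LinearIndependent ℚ
      (fun J : {J : Finset (ZMod d) // J.card = m} => Nmon d p J.1) ∧
    Submodule.span ℚ
        (Set.range fun J : {J : Finset (ZMod d) // J.card = m} => Nmon d p J.1) =
      Submodule.span ℚ
        (Set.range fun I : {I : Finset (ZMod d) // I.card = m} => Lmon d I.1) :=
  stmt9_general d p hp m
end
end
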